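/- Let q be a prime power and p a prime with p ∤ q, and let ζ be a primitive p-th root of unity in an algebraic closure of F_q. If f ∈ F_q^p is nonzero with Hamming weight m, then the set {i ∈ Z/pZ : f(ζ^i) = 0} contains no arithmetic progression of length m in Z/pZ. -/
import Mathlib


open Polynomial Matrix

/-- Hamming weight of a vector: its number of nonzero coordinates. -/
noncomputable def wt {ι α : Type*} [Zero α] (v : ι → α) : ℕ := Set.ncard {i | v i ≠ 0}

/-- The polynomial f(X) = Σ_{i=0}^{p-1} f_i X^i attached to a vector f ∈ F^p. -/
noncomputable def vecPoly {F : Type*} [Field F] {p : ℕ} (f : Fin p → F) : F[X] :=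
  ∑ i : Fin p, Polynomial.C (f i) * Polynomial.X ^ (i : ℕ)

/-- `S` contains an arithmetic progression of length `m` in ℤ/pℤ:
a set {a + k·b : k ∈ {0,…,m−1}} with b ≠ 0. -/
def ContainsAP {p : ℕ} (S : Set (ZMod p)) (m : ℕ) : Prop :=
  ∃ a b : ZMod p, b ≠ 0 ∧ ∀ k : ℕ, k < m → a + (k : ZMod p) * b ∈ S

/-- If f ∈ F_q^p is nonzero of Hamming weight m, with p prime and p ∤ q, then the zero set
{i ∈ ℤ/pℤ : f(ζ^i) = 0} of the Mattson–Solomon transform contains no arithmetic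
progression of length m. -/
theorem zero_set_no_AP (q p : ℕ) (F : Type*) [Field F] [Fintype F]
    (hq : Fintype.card F = q) (hp : p.Prime) (hpq : ¬ p ∣ q)
    (ζ : AlgebraicClosure F) (hζ : IsPrimitiveRoot ζ p)
    (f : Fin p → F) (hf : f ≠ 0) (m : ℕ) (hm : m = wt f) :
    ¬ ContainsAP {i : ZMod p | Polynomial.aeval (ζ ^ (i.val)) (vecPoly f) = 0} m := by
  haveI : Fact p.Prime := ⟨hp⟩
  classical
  rintro ⟨a, b, hb, hmem⟩
  have hζeq : ∀ m n : ℕ, m ≡ n [MOD p] → ζ ^ m = ζ ^ n := by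
    have hred : ∀ t : ℕ, ζ ^ t = ζ ^ (t % p) := by
      intro t
      conv_lhs => rw [← Nat.div_add_mod t p, pow_add, pow_mul, hζ.pow_eq_one, one_pow, one_mul]
    intro m n h
    rw [hred m, hred n, h]
  set s : Finset (Fin p) := Finset.univ.filter (fun i => f i ≠ 0) with hs
  have hscard : s.card = m := by
    rw [hm, wt, Set.ncard_eq_toFinset_card']
    congr 1
    ext i
    simp [hs]
  have e := s.equivFinOfCardEq hscard
  have hbval : b.val ≠ 0 := by rwa [Ne, ZMod.val_eq_zero]
  have hnd : ¬ p ∣ b.val :=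
    Nat.not_dvd_of_pos_of_lt (Nat.pos_of_ne_zero hbval) (ZMod.val_lt b)
  have hcop : (b.val).Coprime p := (hp.coprime_iff_not_dvd.mpr hnd).symm
  set η : AlgebraicClosure F := ζ ^ b.val with hη
  have hηprim : IsPrimitiveRoot η p := hζ.pow_of_coprime b.val hcop
  set v : Fin m → AlgebraicClosure F := fun j => η ^ ((e.symm j : Fin p) : ℕ) with hv
  have hvinj : Function.Injective v := by
    intro j j' h
    have h2 := hηprim.pow_inj (e.symm j : Fin p).isLt (e.symm j' : Fin p).isLt h
    exact e.symm.injective (Subtype.coe_injective (Fin.val_injective h2))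
  set c : Fin m → AlgebraicClosure F := fun j =>
    algebraMap F (AlgebraicClosure F) (f (e.symm j)) * ζ ^ (a.val * ((e.symm j : Fin p) : ℕ)) with hc
  -- the key vanishing sums
  have key : ∀ k : ℕ, k < m → ∑ j : Fin m, v j ^ k * c j = 0 := by
    intro k hk
    have h0 := hmem k hk
    rw [Set.mem_setOf_eq] at h0
    set x : AlgebraicClosure F := ζ ^ ((a + (k : ZMod p) * b).val) with hx
    have hx0 : ∑ i : Fin p, algebraMap F (AlgebraicClosure F) (f i) * x ^ (i : ℕ) = 0 := by
      rw [← h0, vecPoly, map_sum]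
      simp [hx]
    have hsum1 : ∑ i ∈ s, algebraMap F (AlgebraicClosure F) (f i) * x ^ (i : ℕ)
        = ∑ i : Fin p, algebraMap F (AlgebraicClosure F) (f i) * x ^ (i : ℕ) := by
      rw [hs]
      refine Finset.sum_filter_of_ne ?_
      intro i _ hne
      intro hfi
      exact hne (by simp [hfi])
    have hsum2 : ∑ j : Fin m, algebraMap F (AlgebraicClosure F) (f (e.symm j)) * x ^ ((e.symm j : Fin p) : ℕ)
        = ∑ i ∈ s, algebraMap F (AlgebraicClosure F) (f i) * x ^ (i : ℕ) := by
      rw [← Finset.sum_coe_sort s (fun i => algebraMap F (AlgebraicClosure F) (f i) * x ^ (i : ℕ))]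
      exact Equiv.sum_comp e.symm (fun i : s => algebraMap F (AlgebraicClosure F) (f i) * x ^ ((i : Fin p) : ℕ))
    have hterm : ∀ j : Fin m, v j ^ k * c j
        = algebraMap F (AlgebraicClosure F) (f (e.symm j)) * x ^ ((e.symm j : Fin p) : ℕ) := by
      intro j
      set i : ℕ := ((e.symm j : Fin p) : ℕ)
      have hmod : b.val * i * k + a.val * i ≡ (a + (k : ZMod p) * b).val * i [MOD p] := by
        have := (ZMod.natCast_eq_natCast_iff
          (b.val * i * k + a.val * i) ((a + (k : ZMod p) * b).val * i) p).mp
        apply (ZMod.natCast_eq_natCast_iff _ _ p).mp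
        push_cast [ZMod.natCast_val, ZMod.cast_id]
        ring
      calc v j ^ k * c j
          = algebraMap F (AlgebraicClosure F) (f (e.symm j)) * ζ ^ (b.val * i * k + a.val * i) := by
            rw [hv, hc, hη]
            rw [← pow_mul, ← pow_mul, pow_add]
            ring
        _ = algebraMap F (AlgebraicClosure F) (f (e.symm j)) * ζ ^ ((a + (k : ZMod p) * b).val * i) := by
            rw [hζeq _ _ hmod]
        _ = algebraMap F (AlgebraicClosure F) (f (e.symm j)) * x ^ i := by
            rw [hx, ← pow_mul]
    calc ∑ j : Fin m, v j ^ k * c j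
        = ∑ j : Fin m, algebraMap F (AlgebraicClosure F) (f (e.symm j)) * x ^ ((e.symm j : Fin p) : ℕ) := by
          exact Finset.sum_congr rfl fun j _ => hterm j
      _ = 0 := by rw [hsum2, hsum1, hx0]
  -- Vandermonde argument
  set M : Matrix (Fin m) (Fin m) (AlgebraicClosure F) := (Matrix.vandermonde v)ᵀ with hM
  have hdet : M.det ≠ 0 := by
    rw [hM, Matrix.det_transpose]
    exact Matrix.det_vandermonde_ne_zero_iff.mpr hvinj
  have hMc : M.mulVec c = 0 := by
    funext k
    have : M.mulVec c k = ∑ j : Fin m, v j ^ (k : ℕ) * c j := by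
      simp [hM, Matrix.mulVec, dotProduct, Matrix.vandermonde]
    rw [this, key k k.isLt]
    rfl
  have hc0 : c = 0 := Matrix.eq_zero_of_mulVec_eq_zero hdet hMc
  -- contradiction
  obtain ⟨i0, hi0⟩ := Function.ne_iff.mp hf
  have hi0' : f i0 ≠ 0 := by simpa using hi0
  have hi0s : i0 ∈ s := by simp [hs, hi0']
  have := congrFun hc0 (e ⟨i0, hi0s⟩)
  rw [hc] at this
  simp only [Equiv.symm_apply_apply, Pi.zero_apply] at this
  rcases mul_eq_zero.mp this with h | h
  · exact hi0' (by simpa using (_root_.map_eq_zero (algebraMap F (AlgebraicClosure F))).mp h)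
  · exact pow_ne_zero _ (hζ.ne_zero hp.ne_zero) h
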